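/- Let α ∈ [0,1) and β ∈ ((1-α)/2, 1]. Then Lip_β(T) ⊂ D_α(T); that is, every f ∈ Lip_β(T) satisfies Σ_{n∈ℤ} (1+|n|)^{1-α} |f̂(n)|² < ∞. -/

import Mathlib

noncomputable section

open MeasureTheory Set Metric Complex
open scoped Classical ENNReal Real

/-- The unit circle `T` as a subset of `ℂ`. -/
def unitCircle : Set ℂ := Metric.sphere (0 : ℂ) 1

/-- Arc-length measure `|dζ|` on the unit circle, realized as a measure on `ℂ`
(the image of Lebesgue measure on `(0, 2π]` under `θ ↦ e^{iθ}`). -/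
def muT : Measure ℂ :=
  Measure.map (fun θ : ℝ => Complex.exp (Complex.I * θ))
    (volume.restrict (Set.Ioc 0 (2 * Real.pi)))

/-- The `n`-th Fourier coefficient `f̂(n) = (1/2π) ∫_T f(ζ) ζ^{-n} |dζ|`. -/
def fc (f : ℂ → ℂ) (n : ℤ) : ℂ :=
  (1 / (2 * Real.pi)) • ∫ ζ, f ζ * ζ ^ (-n) ∂muT

/-- Membership in `L²(T)`. -/
def MemL2 (f : ℂ → ℂ) : Prop := MeasureTheory.MemLp f 2 muT

/-- The square of the harmonic Dirichlet norm, `‖f‖²_{D(T)} = Σ_{n∈ℤ} (1+|n|)|f̂(n)|²`. -/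
def Dnorm2 (f : ℂ → ℂ) : ℝ≥0∞ :=
  ∑' n : ℤ, ENNReal.ofReal ((1 + (n.natAbs : ℝ)) * ‖fc f n‖ ^ 2)

/-- Membership in the harmonic Dirichlet space `D(T)`. -/
def MemD (f : ℂ → ℂ) : Prop := MemL2 f ∧ Dnorm2 f < ⊤

/-- The linear span of `{ζ^n f(ζ) : n ≥ 0}`: all products `p·f` with `p` an
analytic polynomial. -/
def spanN (f : ℂ → ℂ) : Set (ℂ → ℂ) :=
  {h | ∃ (N : ℕ) (a : ℕ → ℂ), h = fun ζ => (∑ k ∈ Finset.range N, a k * ζ ^ k) * f ζ}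

/-- The linear span of `{ζ^n f(ζ) : n ∈ ℤ}`: all products `p·f` with `p` a
trigonometric polynomial. -/
def spanZ (f : ℂ → ℂ) : Set (ℂ → ℂ) :=
  {h | ∃ (N : ℕ) (a : ℤ → ℂ),
    h = fun ζ => (∑ k ∈ Finset.Icc (-(N : ℤ)) (N : ℤ), a k * ζ ^ k) * f ζ}

/-- The closure of a set `S ⊆ D(T)` in the norm topology of `D(T)`. -/
def closureD (S : Set (ℂ → ℂ)) : Set (ℂ → ℂ) :=
  {g | MemD g ∧ ∀ ε : ℝ, 0 < ε → ∃ h ∈ S, Dnorm2 (g - h) < ENNReal.ofReal ε}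

/-- `[f]_ℕ`, the closure in `D(T)` of the span of `{ζ^n f : n ≥ 0}`. -/
def closSpanN (f : ℂ → ℂ) : Set (ℂ → ℂ) := closureD (spanN f)

/-- `[f]_ℤ`, the closure in `D(T)` of the span of `{ζ^n f : n ∈ ℤ}`. -/
def closSpanZ (f : ℂ → ℂ) : Set (ℂ → ℂ) := closureD (spanZ f)

/-- `f` is cyclic for `D(T)`: `[f]_ℕ = D(T)`. -/
def cyclicD (f : ℂ → ℂ) : Prop := closSpanN f = {g | MemD g}

/-- The Poisson extension `P[f](rζ) = Σ_{n∈ℤ} f̂(n) r^{|n|} ζ^n`. -/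
def poissonExt (f : ℂ → ℂ) (r : ℝ) (ζ : ℂ) : ℂ :=
  ∑' n : ℤ, fc f n * (r ^ n.natAbs : ℝ) * ζ ^ n

/-- The radial limit `f*(ζ) = lim_{r→1⁻} P[f](rζ)` exists and equals `L`. -/
def hasRadialLimit (f : ℂ → ℂ) (ζ : ℂ) (L : ℂ) : Prop :=
  Filter.Tendsto (fun r : ℝ => poissonExt f r ζ) (nhdsWithin 1 (Set.Iio 1)) (nhds L)

/-- The logarithmic kernel `log (1/|z-w|)` (with value `∞` on the diagonal),
truncated at `0`. -/
def logKer (z w : ℂ) : ℝ≥0∞ :=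
  if z = w then ⊤ else ENNReal.ofReal (Real.log (1 / ‖z - w‖))

/-- The logarithmic energy `I(μ) = ∬ log(1/|ζ-ζ'|) dμ(ζ) dμ(ζ')`. -/
def energy (μ : Measure ℂ) : ℝ≥0∞ := ∫⁻ z, ∫⁻ w, logKer z w ∂μ ∂μ

/-- `E` has logarithmic capacity zero: every probability measure supported on a
compact subset of `E` has infinite energy. -/
def capZero (E : Set ℂ) : Prop :=
  ∀ μ : Measure ℂ, IsProbabilityMeasure μ →
    (∃ K : Set ℂ, IsCompact K ∧ K ⊆ E ∧ μ Kᶜ = 0) → energy μ = ⊤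

/-- `D_E = {g ∈ D(T) : g* = 0 quasi-everywhere on E}`. -/
def DirE (E : Set ℂ) : Set (ℂ → ℂ) :=
  {g | MemD g ∧ ∃ S : Set ℂ, capZero S ∧ ∀ ζ ∈ E \ S, hasRadialLimit g ζ 0}

/-- `Lip_β(T)`: continuous functions on `T` with finite `β`-Hölder constant. -/
def MemLip (β : ℝ) (f : ℂ → ℂ) : Prop :=
  ContinuousOn f unitCircle ∧
    ∃ C : ℝ, ∀ ζ ∈ unitCircle, ∀ ζ' ∈ unitCircle, ‖f ζ - f ζ'‖ ≤ C * ‖ζ - ζ'‖ ^ β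

/-- `E` is a Carleson set: `E` has measure zero and `∫_T log(1/d(ζ,E)) |dζ| < ∞`. -/
def IsCarleson (E : Set ℂ) : Prop :=
  muT E = 0 ∧ ∫⁻ ζ, ENNReal.ofReal (Real.log (1 / Metric.infDist ζ E)) ∂muT < ⊤

/-- `φ ∈ C^{1+α}(T)`: as a function of the angle, `φ` is `C¹` and its derivative
is `α`-Hölder on `T`. -/
def MemC1alpha (α : ℝ) (φ : ℂ → ℝ) : Prop :=
  ContDiff ℝ 1 (fun θ : ℝ => φ (Complex.exp (Complex.I * θ))) ∧
  ∃ C : ℝ, ∀ x y : ℝ,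
    |deriv (fun θ : ℝ => φ (Complex.exp (Complex.I * θ))) x -
      deriv (fun θ : ℝ => φ (Complex.exp (Complex.I * θ))) y| ≤
        C * ‖Complex.exp (Complex.I * x) - Complex.exp (Complex.I * y)‖ ^ α

/-- The square of the weighted harmonic Dirichlet norm,
`‖f‖²_{D_α(T)} = Σ_{n∈ℤ} (1+|n|)^{1-α} |f̂(n)|²`. -/
def Dnorm2W (α : ℝ) (f : ℂ → ℂ) : ℝ≥0∞ :=
  ∑' n : ℤ, ENNReal.ofReal ((1 + (n.natAbs : ℝ)) ^ (1 - α) * ‖fc f n‖ ^ 2)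

/-- Membership in the weighted harmonic Dirichlet space `D_α(T)`. -/
def MemDW (α : ℝ) (f : ℂ → ℂ) : Prop := MemL2 f ∧ Dnorm2W α f < ⊤


section AuxHolder
open MeasureTheory Set Metric Complex Function AddCircle
open scoped ENNReal Real

instance fact2pi : Fact (0 < 2 * Real.pi) := ⟨by positivity⟩

lemma norm_exp_tI_sub_one_sq (t : ℝ) :
    ‖Complex.exp ((t:ℂ) * Complex.I) - 1‖^2 = 2 - 2 * Real.cos t := by
  rw [Complex.exp_mul_I, Complex.sq_norm, Complex.normSq_apply]
  simp [Complex.cos_ofReal_re, Complex.sin_ofReal_re]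
  nlinarith [Real.sin_sq_add_cos_sq t]

lemma norm_exp_tI_sub_one_le (t : ℝ) (ht : 0 ≤ t) : ‖Complex.exp ((t:ℂ) * Complex.I) - 1‖ ≤ t := by
  have h1 : ‖Complex.exp ((t:ℂ) * Complex.I) - 1‖^2 ≤ t^2 := by
    rw [norm_exp_tI_sub_one_sq]
    nlinarith [Real.one_sub_sq_div_two_le_cos (x := t)]
  exact le_of_pow_le_pow_left₀ two_ne_zero ht h1

lemma exp_mem (θ : ℝ) : Complex.exp (Complex.I * θ) ∈ unitCircle := by
  simp [unitCircle, mem_sphere_zero_iff_norm, Complex.norm_exp]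

lemma measurable_e : Measurable (fun θ : ℝ => Complex.exp (Complex.I * θ)) := by fun_prop

lemma measurableSet_unitCircle : MeasurableSet unitCircle := by
  unfold unitCircle; exact isClosed_sphere.measurableSet

lemma muT_compl : muT unitCircleᶜ = 0 := by
  rw [muT, Measure.map_apply measurable_e measurableSet_unitCircle.compl]
  convert measure_empty
  · ext θ; simp [exp_mem θ]
  · infer_instance

lemma muT_restrict : muT.restrict unitCircle = muT :=
  Measure.restrict_eq_self_of_ae_mem (by rw [MeasureTheory.ae_iff]; exact muT_compl)

lemma aesm_of_continuousOn {F : ℂ → ℂ} (hF : ContinuousOn F unitCircle) :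
    AEStronglyMeasurable F muT := by
  rw [← muT_restrict]; exact hF.aestronglyMeasurable measurableSet_unitCircle

lemma fourier_eq (n : ℤ) (x : ℝ) :
    @fourier (2*Real.pi) n (x : ℝ) = Complex.exp ((n*x:ℝ) * Complex.I) := by
  rw [fourier_coe_apply]
  congr 1
  push_cast
  have : (Real.pi : ℂ) ≠ 0 := by exact_mod_cast Real.pi_ne_zero
  field_simp

lemma periodic_fe (f : ℂ → ℂ) :
    Function.Periodic (fun θ : ℝ => f (Complex.exp (Complex.I * θ))) (2*Real.pi) := by
  intro θ
  have h1 : Complex.I * (↑(θ + 2*Real.pi)) = Complex.I * θ + 2*Real.pi*Complex.I := by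
    push_cast; ring
  show f (Complex.exp (Complex.I * ↑(θ + 2*Real.pi))) = _
  rw [h1, Complex.exp_add, Complex.exp_two_pi_mul_I, mul_one]

def gq (f : ℂ → ℂ) : AddCircle (2*Real.pi) → ℂ := (periodic_fe f).lift

lemma gq_coe (f : ℂ → ℂ) (θ : ℝ) : gq f ↑θ = f (Complex.exp (Complex.I * θ)) :=
  Function.Periodic.lift_coe _ _

lemma cont_fe {f : ℂ → ℂ} (hfc : ContinuousOn f unitCircle) :
    Continuous (fun θ : ℝ => f (Complex.exp (Complex.I * θ))) :=
  hfc.comp_continuous (by fun_prop) exp_mem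

lemma gq_continuous {f : ℂ → ℂ} (hfc : ContinuousOn f unitCircle) : Continuous (gq f) :=
  Continuous.quotient_liftOn' (cont_fe hfc) _

lemma contOn_integrand {f : ℂ → ℂ} (hfc : ContinuousOn f unitCircle) (n : ℤ) :
    ContinuousOn (fun ζ : ℂ => f ζ * ζ ^ (-n)) unitCircle := by
  apply hfc.mul
  intro ζ hζ
  have hζ0 : ζ ≠ 0 := by
    intro h
    rw [h] at hζ
    simp [unitCircle] at hζ
  exact (continuousAt_zpow₀ _ _ (Or.inl hζ0)).continuousWithinAt

lemma fc_eq_fourierCoeff {f : ℂ → ℂ} (hfc : ContinuousOn f unitCircle) (n : ℤ) :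
    fc f n = fourierCoeff (gq f) n := by
  rw [fourierCoeff_eq_intervalIntegral (gq f) n 0, zero_add,
    intervalIntegral.integral_of_le (by positivity : (0:ℝ) ≤ 2*Real.pi)]
  rw [fc, muT, integral_map measurable_e.aemeasurable
    (show AEStronglyMeasurable _ muT from aesm_of_continuousOn (contOn_integrand hfc n))]
  congr 1
  apply setIntegral_congr_fun measurableSet_Ioc
  intro θ _
  show f (Complex.exp (Complex.I * ↑θ)) * Complex.exp (Complex.I * ↑θ) ^ (-n)
      = @fourier (2*Real.pi) (-n) ↑θ • gq f ↑θ
  rw [fourier_eq, gq_coe, smul_eq_mul, mul_comm]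
  congr 1
  rw [show Complex.exp (Complex.I * ↑θ) ^ (-n)
      = Complex.exp ((↑(-n)) * (Complex.I * ↑θ)) from (Complex.exp_int_mul _ _).symm]
  congr 1
  push_cast
  ring

section AddCircleAux
variable {T : ℝ} [hT : Fact (0 < T)]

lemma cont_memℒp (p : ℝ≥0∞) {G : AddCircle T → ℂ} (hG : Continuous G) :
    MemLp G p (@haarAddCircle T hT) := by
  obtain ⟨M, hM⟩ := isCompact_univ.exists_bound_of_continuousOn hG.continuousOn
  exact MemLp.of_bound hG.aestronglyMeasurable M (Filter.Eventually.of_forall fun x => hM x trivial)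

lemma cont_integrable {G : AddCircle T → ℂ} (hG : Continuous G) :
    Integrable G (@haarAddCircle T hT) :=
  memLp_one_iff_integrable.mp (cont_memℒp 1 hG)

lemma parseval_cont {F : AddCircle T → ℂ} (hF : Continuous F) :
    Summable (fun n : ℤ => ‖fourierCoeff F n‖^2) ∧
      ∑' n : ℤ, ‖fourierCoeff F n‖^2 = ∫ x, ‖F x‖^2 ∂(@haarAddCircle T hT) := by
  have hmem : MemLp F 2 haarAddCircle := cont_memℒp 2 hF
  set L : Lp ℂ 2 (@haarAddCircle T hT) := hmem.toLp F with hL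
  have hae : ∀ᵐ x ∂(@haarAddCircle T hT), (L : AddCircle T → ℂ) x = F x := hmem.coeFn_toLp
  have hcoeff : ∀ n : ℤ, fourierCoeff (L : AddCircle T → ℂ) n = fourierCoeff F n := by
    intro n
    apply integral_congr_ae
    filter_upwards [hae] with x hx
    rw [hx]
  have hsum : Summable (fun n : ℤ => ‖fourierCoeff (L : AddCircle T → ℂ) n‖^2) := by
    have h1 := (lp.memℓp (fourierBasis.repr L)).summable (p := 2) (by norm_num)
    have h2 : ∀ n : ℤ, ‖fourierBasis.repr L n‖ ^ ((2:ℝ≥0∞).toReal)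
        = ‖fourierCoeff (L : AddCircle T → ℂ) n‖^2 := by
      intro n
      rw [fourierBasis_repr, show ((2:ℝ≥0∞).toReal) = ((2:ℕ):ℝ) by norm_num,
        Real.rpow_natCast]
    exact (summable_congr h2).mp h1
  constructor
  · exact hsum.congr fun n => by rw [hcoeff]
  · have hp := tsum_sq_fourierCoeff L
    have h3 : (∑' n : ℤ, ‖fourierCoeff F n‖^2)
        = ∑' n : ℤ, ‖fourierCoeff (L : AddCircle T → ℂ) n‖^2 :=
      tsum_congr fun n => by rw [hcoeff]
    rw [h3, hp]
    apply integral_congr_ae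
    filter_upwards [hae] with x hx
    rw [hx]

lemma fourier_sub_x (m : ℤ) (x y : AddCircle T) :
    fourier m (x - y) = fourier m x * fourier m (-y) := by
  rw [fourier_apply, fourier_apply, fourier_apply, sub_eq_add_neg, smul_add, toCircle_add,
    Circle.coe_mul]

lemma fourierCoeff_translate {F : AddCircle T → ℂ} (hF : Continuous F) (h : ℝ) (n : ℤ) :
    fourierCoeff (fun x => F (x + (h:AddCircle T))) n
      = fourier n (h:AddCircle T) * fourierCoeff F n := by
  unfold fourierCoeff
  have e1 : (fun t : AddCircle T => fourier (-n) t • F (t + (h:AddCircle T)))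
      = fun t => (fun y : AddCircle T => fourier (-n) (y - (h:AddCircle T)) • F y)
          (t + (h:AddCircle T)) := by
    funext t
    simp
  have e1' := MeasureTheory.integral_add_right_eq_self (μ := (@haarAddCircle T hT))
    (fun y : AddCircle T => fourier (-n) (y - (h:AddCircle T)) • F y) (h:AddCircle T)
  rw [e1, e1']
  have e2 : (fun y : AddCircle T => fourier (-n) (y - (h:AddCircle T)) • F y)
      = fun y => (fourier n (h:AddCircle T) : ℂ) • (fourier (-n) y • F y) := by
    funext y
    rw [fourier_sub_x, smul_smul]
    congr 1
    rw [mul_comm]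
    congr 1
    simp [fourier_apply, neg_smul, smul_neg]
  rw [e2, integral_smul, smul_eq_mul]

end AddCircleAux

lemma pow_collect (j : ℕ) (α β C : ℝ) :
    ((2:ℝ)^(j+2))^(1-α) * ((C * (Real.pi/2^(j+1))^β)^2/2)
      = (C^2 * Real.pi^(2*β) * (2:ℝ)^(2-2*α-2*β) / 2) * ((2:ℝ)^(1-α-2*β))^j := by
  have h2 : (0:ℝ) ≤ 2 := by norm_num
  have h2' : (0:ℝ) < 2 := by norm_num
  have hπ : (0:ℝ) ≤ Real.pi := Real.pi_pos.le
  rw [← Real.rpow_natCast (2:ℝ) (j+2), ← Real.rpow_natCast (2:ℝ) (j+1),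
    ← Real.rpow_natCast ((2:ℝ)^(1-α-2*β)) j]
  rw [← Real.rpow_mul h2, ← Real.rpow_mul h2]
  rw [Real.div_rpow hπ (Real.rpow_nonneg h2 _)]
  rw [← Real.rpow_mul h2]
  rw [mul_pow, div_pow]
  rw [← Real.rpow_natCast (Real.pi^β) 2, ← Real.rpow_mul hπ]
  rw [← Real.rpow_natCast ((2:ℝ)^((↑(j+1):ℝ)*β)) 2, ← Real.rpow_mul h2]
  have hexp : (2:ℝ) ^ ((↑(j + 2):ℝ) * (1 - α)) * ((2:ℝ) ^ ((↑(j + 1):ℝ) * β * ((2:ℕ):ℝ)))⁻¹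
      = (2:ℝ) ^ (2 - 2*α - 2*β) * (2:ℝ) ^ ((1 - α - 2*β) * (j:ℝ)) := by
    rw [← Real.rpow_neg h2, ← Real.rpow_add h2', ← Real.rpow_add h2']
    congr 1
    push_cast
    ring
  have hπe : Real.pi ^ (β * ((2:ℕ):ℝ)) = Real.pi ^ (2*β) := by
    rw [show β * ((2:ℕ):ℝ) = 2*β by push_cast; ring]
  rw [hπe]
  linear_combination (C^2 * Real.pi^(2*β) / 2) * hexp

lemma normcirc (θ : ℝ) : ‖Complex.exp (Complex.I * (θ:ℂ))‖ = 1 := by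
  simp [Complex.norm_exp]

lemma ediff_le {θ h : ℝ} (hh : 0 ≤ h) :
    ‖Complex.exp (Complex.I * ((θ+h:ℝ):ℂ)) - Complex.exp (Complex.I * (θ:ℂ))‖ ≤ h := by
  have e1 : Complex.I * ((θ+h:ℝ):ℂ) = Complex.I * θ + (h:ℂ) * Complex.I := by push_cast; ring
  rw [e1, Complex.exp_add, show Complex.exp (Complex.I * (θ:ℂ)) * Complex.exp ((h:ℂ)*Complex.I)
      - Complex.exp (Complex.I * (θ:ℂ))
      = Complex.exp (Complex.I * (θ:ℂ)) * (Complex.exp ((h:ℂ)*Complex.I) - 1) by ring,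
    norm_mul, normcirc, one_mul]
  exact norm_exp_tI_sub_one_le h hh

lemma key_bound {f : ℂ → ℂ} (hfc : ContinuousOn f unitCircle) {β C : ℝ} (hβ : 0 < β) (hC : 0 ≤ C)
    (hlip : ∀ ζ ∈ unitCircle, ∀ ζ' ∈ unitCircle, ‖f ζ - f ζ'‖ ≤ C * ‖ζ - ζ'‖ ^ β)
    (h : ℝ) (hh : 0 < h) (s : Finset ℤ) :
    ∑ n ∈ s, (2 - 2*Real.cos (n*h)) * ‖fc f n‖^2 ≤ (C * h^β)^2 := by
  set G := gq f with hGdef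
  have hG : Continuous G := gq_continuous hfc
  set Fh : AddCircle (2*Real.pi) → ℂ :=
    fun x => G (x + (h : AddCircle (2*Real.pi))) - G x with hFhdef
  have hGt : Continuous (fun x : AddCircle (2*Real.pi) => G (x + (h : AddCircle (2*Real.pi)))) :=
    hG.comp (continuous_id.add continuous_const)
  have hFh : Continuous Fh := hGt.sub hG
  have hcoe : ∀ n : ℤ, fourierCoeff Fh n
      = (fourier n ((h : ℝ) : AddCircle (2*Real.pi)) - 1) * fourierCoeff G n := by
    intro n
    have hsub : fourierCoeff Fh n = fourierCoeff (fun x => G (x + (h : AddCircle (2*Real.pi)))) n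
        - fourierCoeff G n := by
      unfold fourierCoeff
      rw [← integral_sub]
      · congr 1
        funext t
        simp only [Fh, smul_sub, Pi.sub_apply]
      · exact cont_integrable (((fourier (-n)).continuous).smul hGt)
      · exact cont_integrable (((fourier (-n)).continuous).smul hG)
    rw [hsub, fourierCoeff_translate hG h n, sub_mul, one_mul]
  have hpt : ∀ x : AddCircle (2*Real.pi), ‖Fh x‖ ≤ C * h^β := by
    intro x
    induction x using QuotientAddGroup.induction_on with
    | H θ =>
      have hadd : ((θ:ℝ) : AddCircle (2*Real.pi)) + ((h:ℝ) : AddCircle (2*Real.pi))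
          = ((θ + h : ℝ) : AddCircle (2*Real.pi)) := rfl
      show ‖G (((θ:ℝ) : AddCircle (2*Real.pi)) + _) - G _‖ ≤ _
      rw [hadd, hGdef, gq_coe, gq_coe]
      calc ‖f (Complex.exp (Complex.I * ((θ+h:ℝ):ℂ))) - f (Complex.exp (Complex.I * (θ:ℂ)))‖
          ≤ C * ‖Complex.exp (Complex.I * ((θ+h:ℝ):ℂ)) - Complex.exp (Complex.I * (θ:ℂ))‖ ^ β :=
            hlip _ (exp_mem _) _ (exp_mem _)
        _ ≤ C * h ^ β := by
            apply mul_le_mul_of_nonneg_left _ hC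
            exact Real.rpow_le_rpow (norm_nonneg _) (ediff_le hh.le) hβ.le
  have hint : ∫ x, ‖Fh x‖^2 ∂(@haarAddCircle (2*Real.pi) fact2pi) ≤ (C * h^β)^2 := by
    have hcont2 : Continuous (fun x => ‖Fh x‖^2) := (hFh.norm.pow 2)
    have hi1 : Integrable (fun x => ‖Fh x‖^2) (@haarAddCircle (2*Real.pi) fact2pi) := by
      obtain ⟨M, hM⟩ := isCompact_univ.exists_bound_of_continuousOn hcont2.continuousOn
      exact (memLp_one_iff_integrable.mp
        (MemLp.of_bound hcont2.aestronglyMeasurable M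
          (Filter.Eventually.of_forall fun x => hM x trivial)))
    calc ∫ x, ‖Fh x‖^2 ∂(@haarAddCircle (2*Real.pi) fact2pi)
        ≤ ∫ _x, (C*h^β)^2 ∂(@haarAddCircle (2*Real.pi) fact2pi) := by
          apply integral_mono hi1 (integrable_const _)
          intro x
          exact pow_le_pow_left₀ (norm_nonneg _) (hpt x) 2
      _ = (C*h^β)^2 := by simp
  obtain ⟨hsum, heq⟩ := parseval_cont hFh
  have hterm : ∀ n : ℤ, (2 - 2*Real.cos (n*h)) * ‖fc f n‖^2 = ‖fourierCoeff Fh n‖^2 := by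
    intro n
    rw [hcoe n, norm_mul, mul_pow, fc_eq_fourierCoeff hfc, fourier_eq,
      norm_exp_tI_sub_one_sq]
  calc ∑ n ∈ s, (2 - 2*Real.cos (n*h)) * ‖fc f n‖^2
      = ∑ n ∈ s, ‖fourierCoeff Fh n‖^2 := Finset.sum_congr rfl fun n _ => hterm n
    _ ≤ ∑' n : ℤ, ‖fourierCoeff Fh n‖^2 := Summable.sum_le_tsum s (fun n _ => sq_nonneg _) hsum
    _ = ∫ x, ‖Fh x‖^2 ∂(@haarAddCircle (2*Real.pi) fact2pi) := heq
    _ ≤ (C * h^β)^2 := hint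

end AuxHolder

section MainProof
open MeasureTheory Set Metric Complex Function AddCircle
open scoped ENNReal Real

lemma muT_univ' : muT Set.univ = ENNReal.ofReal (2 * Real.pi) := by
  rw [muT, Measure.map_apply measurable_e MeasurableSet.univ]
  simp [Real.volume_Ioc]

instance muT_finite : IsFiniteMeasure muT :=
  ⟨by rw [muT_univ']; exact ENNReal.ofReal_lt_top⟩

/-- For `α ∈ [0,1)` and `β ∈ ((1-α)/2, 1]` we have
`Lip_β(T) ⊂ D_α(T)`. -/
theorem statement14 (α β : ℝ) (hα : α ∈ Set.Ico (0 : ℝ) 1)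
    (hβ : β ∈ Set.Ioc ((1 - α) / 2) 1) (f : ℂ → ℂ) (hf : MemLip β f) :
    MemDW α f := by
  obtain ⟨hα0, hα1⟩ := hα
  obtain ⟨hβlow, hβ1⟩ := hβ
  have hβ0 : 0 < β := by linarith
  obtain ⟨hfc, C0, hC0⟩ := hf
  set C := max C0 0 with hCdef
  have hC : 0 ≤ C := le_max_right _ _
  have hlip : ∀ ζ ∈ unitCircle, ∀ ζ' ∈ unitCircle, ‖f ζ - f ζ'‖ ≤ C * ‖ζ - ζ'‖ ^ β := by
    intro ζ hζ ζ' hζ'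
    exact (hC0 ζ hζ ζ' hζ').trans (mul_le_mul_of_nonneg_right (le_max_left _ _)
      (Real.rpow_nonneg (norm_nonneg _) β))
  constructor
  · -- MemL2
    obtain ⟨M, hM⟩ := (isCompact_sphere (0:ℂ) 1).exists_bound_of_continuousOn hfc
    refine MemLp.of_bound (aesm_of_continuousOn hfc) M ?_
    have hae : ∀ᵐ ζ ∂muT, ζ ∈ unitCircle := by
      rw [MeasureTheory.ae_iff]; exact muT_compl
    filter_upwards [hae] with ζ hζ
    exact hM ζ hζ
  · -- finiteness of Dnorm2W
    set a : ℤ → ℝ≥0∞ := fun n => ENNReal.ofReal ((1 + (n.natAbs:ℝ))^(1-α) * ‖fc f n‖^2)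
      with hadef
    have hD : Dnorm2W α f = ∑' n : ℤ, a n := rfl
    set q : ℝ := (2:ℝ)^(1-α-2*β) with hqdef
    set D : ℝ := C^2 * Real.pi^(2*β) * (2:ℝ)^(2-2*α-2*β) / 2 with hDdef
    have hblock : ∀ (j:ℕ) (s : Finset ℤ), (∀ n ∈ s, n ≠ 0 ∧ Nat.log 2 n.natAbs = j) →
        ∑ n ∈ s, ‖fc f n‖^2 ≤ (C * (Real.pi/2^(j+1))^β)^2/2 := by
      intro j s hs
      have hkey := key_bound hfc hβ0 hC hlip (Real.pi/2^(j+1)) (by positivity) s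
      have hterm : ∀ n ∈ s, 2 * ‖fc f n‖^2
          ≤ (2 - 2*Real.cos (n*(Real.pi/2^(j+1)))) * ‖fc f n‖^2 := by
        intro n hn
        obtain ⟨hn0, hlog⟩ := hs n hn
        have hm1 : n.natAbs ≠ 0 := Int.natAbs_ne_zero.mpr hn0
        have hml : 2^j ≤ n.natAbs := by rw [← hlog]; exact Nat.pow_log_le_self 2 hm1
        have hmu : n.natAbs < 2^(j+1) := by
          rw [← hlog]; exact Nat.lt_pow_succ_log_self (by norm_num) _
        have hh2 : (0:ℝ) < Real.pi/2^(j+1) := by positivity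
        have hcos : Real.cos ((n:ℝ)*(Real.pi/2^(j+1))) ≤ 0 := by
          have habs : |(n:ℝ)*(Real.pi/2^(j+1))| = (n.natAbs:ℝ)*(Real.pi/2^(j+1)) := by
            rw [abs_mul, abs_of_pos hh2, Nat.cast_natAbs, Int.cast_abs]
          rw [← Real.cos_abs, habs]
          apply Real.cos_nonpos_of_pi_div_two_le_of_le
          · have h1 : ((2:ℝ)^j) ≤ (n.natAbs:ℝ) := by exact_mod_cast hml
            have h3 : ((2:ℝ)^j) * (Real.pi/2^(j+1)) = Real.pi/2 := by
              rw [pow_succ]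
              field_simp
            calc Real.pi/2 = ((2:ℝ)^j) * (Real.pi/2^(j+1)) := h3.symm
              _ ≤ (n.natAbs:ℝ)*(Real.pi/2^(j+1)) := mul_le_mul_of_nonneg_right h1 hh2.le
          · have h1 : (n.natAbs:ℝ) ≤ ((2:ℝ)^(j+1)) := by exact_mod_cast hmu.le
            have h3 : ((2:ℝ)^(j+1)) * (Real.pi/2^(j+1)) = Real.pi := by
              field_simp
            calc (n.natAbs:ℝ)*(Real.pi/2^(j+1))
                ≤ ((2:ℝ)^(j+1)) * (Real.pi/2^(j+1)) := mul_le_mul_of_nonneg_right h1 hh2.le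
              _ = Real.pi := h3
              _ ≤ Real.pi + Real.pi/2 := by linarith [Real.pi_pos]
        nlinarith [sq_nonneg ‖fc f n‖, mul_nonneg (neg_nonneg.mpr hcos) (sq_nonneg ‖fc f n‖)]
      have h2 : 2 * ∑ n ∈ s, ‖fc f n‖^2 ≤ (C * (Real.pi/2^(j+1))^β)^2 := by
        calc 2 * ∑ n ∈ s, ‖fc f n‖^2 = ∑ n ∈ s, 2 * ‖fc f n‖^2 := Finset.mul_sum _ _ _
          _ ≤ ∑ n ∈ s, (2 - 2*Real.cos (n*(Real.pi/2^(j+1)))) * ‖fc f n‖^2 :=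
              Finset.sum_le_sum hterm
          _ ≤ (C * (Real.pi/2^(j+1))^β)^2 := hkey
      linarith
    set g2 : ℕ → ℤ → ℝ≥0∞ :=
      fun j n => if (n ≠ 0 ∧ Nat.log 2 n.natAbs = j) then a n else 0 with hg2
    have hsplit : ∀ n : ℤ, a n ≤ (if n = 0 then a 0 else 0) + ∑' j : ℕ, g2 j n := by
      intro n
      by_cases hn : n = 0
      · subst hn
        simp [g2]
      · have hle : a n = g2 (Nat.log 2 n.natAbs) n := by simp [g2, hn]
        calc a n = g2 (Nat.log 2 n.natAbs) n := hle
          _ ≤ ∑' j, g2 j n := ENNReal.le_tsum _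
          _ ≤ (if n = 0 then a 0 else 0) + ∑' j, g2 j n := le_add_self
    have hjn : ∀ j : ℕ, ∑' n : ℤ, g2 j n ≤ ENNReal.ofReal (D * q^j) := by
      intro j
      have hfin : ∑' n : ℤ, g2 j n
          = ∑ n ∈ (Finset.Icc (-(2^(j+1):ℤ)) (2^(j+1))), g2 j n := by
        apply tsum_eq_sum
        intro n hn
        rw [hg2]
        dsimp only
        split_ifs with hcond
        · exfalso
          obtain ⟨hn0, hlog⟩ := hcond
          apply hn
          have hmu : n.natAbs < 2^(j+1) := by
            rw [← hlog]; exact Nat.lt_pow_succ_log_self (by norm_num) _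
          have h1 : n.natAbs ≤ (2^(j+1) : ℕ) := hmu.le
          have hcast : ((2:ℤ)^(j+1)) = (((2^(j+1) : ℕ)) : ℤ) := by push_cast; ring
          rw [Finset.mem_Icc, hcast]
          omega
        · rfl
      rw [hfin]
      rw [show (∑ n ∈ (Finset.Icc (-(2^(j+1):ℤ)) (2^(j+1))), g2 j n)
          = ∑ n ∈ (Finset.Icc (-(2^(j+1):ℤ)) (2^(j+1))).filter
              (fun n => n ≠ 0 ∧ Nat.log 2 n.natAbs = j), a n from (Finset.sum_filter _ _).symm]
      set t := (Finset.Icc (-(2^(j+1):ℤ)) (2^(j+1))).filter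
        (fun n => n ≠ 0 ∧ Nat.log 2 n.natAbs = j) with htdef
      have hreal : ∑ n ∈ t, ((1 + (n.natAbs:ℝ))^(1-α) * ‖fc f n‖^2) ≤ D * q^j := by
        have hW : ∀ n ∈ t, (1 + (n.natAbs:ℝ))^(1-α) * ‖fc f n‖^2
            ≤ ((2:ℝ)^(j+2))^(1-α) * ‖fc f n‖^2 := by
          intro n hn
          obtain ⟨-, hn0, hlog⟩ := Finset.mem_filter.mp hn
          have hmu : n.natAbs < 2^(j+1) := by
            rw [← hlog]; exact Nat.lt_pow_succ_log_self (by norm_num) _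
          have hb : (1 + (n.natAbs:ℝ)) ≤ (2:ℝ)^(j+2) := by
            have h1 : (n.natAbs:ℝ) + 1 ≤ (2:ℝ)^(j+1) := by exact_mod_cast hmu
            have h2 : (2:ℝ)^(j+1) ≤ (2:ℝ)^(j+2) := by
              apply pow_le_pow_right₀ (by norm_num) (by omega)
            linarith
          apply mul_le_mul_of_nonneg_right _ (sq_nonneg _)
          exact Real.rpow_le_rpow (by positivity) hb (by linarith)
        calc ∑ n ∈ t, ((1 + (n.natAbs:ℝ))^(1-α) * ‖fc f n‖^2)
            ≤ ∑ n ∈ t, ((2:ℝ)^(j+2))^(1-α) * ‖fc f n‖^2 := Finset.sum_le_sum hW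
          _ = ((2:ℝ)^(j+2))^(1-α) * ∑ n ∈ t, ‖fc f n‖^2 := (Finset.mul_sum _ _ _).symm
          _ ≤ ((2:ℝ)^(j+2))^(1-α) * ((C * (Real.pi/2^(j+1))^β)^2/2) := by
              apply mul_le_mul_of_nonneg_left
                (hblock j t (fun n hn => (Finset.mem_filter.mp hn).2))
                (Real.rpow_nonneg (by positivity) _)
          _ = D * q^j := by rw [hDdef, hqdef]; exact pow_collect j α β C
      calc ∑ n ∈ t, a n
          = ENNReal.ofReal (∑ n ∈ t, ((1 + (n.natAbs:ℝ))^(1-α) * ‖fc f n‖^2)) := by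
            rw [ENNReal.ofReal_sum_of_nonneg (fun n _ => by positivity)]
        _ ≤ ENNReal.ofReal (D * q^j) := ENNReal.ofReal_le_ofReal hreal
    have hgeo : ∑' j : ℕ, ENNReal.ofReal (D * q^j) < ⊤ := by
      have hq0 : 0 ≤ q := Real.rpow_nonneg (by norm_num) _
      have hq1 : q < 1 := Real.rpow_lt_one_of_one_lt_of_neg (by norm_num) (by linarith)
      have hD0 : 0 ≤ D := by
        rw [hDdef]
        have : (0:ℝ) ≤ Real.pi^(2*β) := Real.rpow_nonneg Real.pi_pos.le _
        have h2 : (0:ℝ) ≤ (2:ℝ)^(2-2*α-2*β) := Real.rpow_nonneg (by norm_num) _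
        positivity
      have hsum : Summable (fun j : ℕ => D * q^j) :=
        (summable_geometric_of_lt_one hq0 hq1).mul_left D
      rw [← ENNReal.ofReal_tsum_of_nonneg (fun j => mul_nonneg hD0 (pow_nonneg hq0 j)) hsum]
      exact ENNReal.ofReal_lt_top
    calc Dnorm2W α f = ∑' n : ℤ, a n := hD
      _ ≤ ∑' n : ℤ, ((if n = 0 then a 0 else 0) + ∑' j : ℕ, g2 j n) :=
          ENNReal.tsum_le_tsum hsplit
      _ = (∑' n : ℤ, if n = 0 then a 0 else 0) + ∑' n : ℤ, ∑' j : ℕ, g2 j n :=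
          ENNReal.tsum_add
      _ = a 0 + ∑' j : ℕ, ∑' n : ℤ, g2 j n := by rw [tsum_ite_eq, ENNReal.tsum_comm]
      _ ≤ a 0 + ∑' j : ℕ, ENNReal.ofReal (D * q^j) :=
          add_le_add le_rfl (ENNReal.tsum_le_tsum hjn)
      _ < ⊤ := ENNReal.add_lt_top.mpr ⟨ENNReal.ofReal_lt_top, hgeo⟩

end MainProof
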